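/- arXiv:2305.07480 — 3 statements merged into one kernel-verified Lean document; each statement's English description precedes it below -/
import Mathlib

section
/- Let V(x) = Σ_{i=1}^3 A_i e^{a_i x} with a_1 < a_2 < a_3 < 0, A_3 > 0, A_2 > 0, A_1 < 0, and suppose V(0) > 0, V'(0) = 0, V''(0) < 0. Then there exists exactly one x_b > 0 such that (V'(x_b))^2 - V(x_b)·V''(x_b) = 0. -/
/-!
Expanding, `V'² - V V'' = -∑_{i<j} A_i A_j (a_i - a_j)² e^{(a_i + a_j) x}`. After division
by `e^{(a₂ + a₃) x}` the two terms containing `A₁` become positive multiples of decaying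
exponentials and the third is the negative constant `-A₂ A₃ (a₂ - a₃)²`. The quotient is
therefore strictly decreasing, positive at `0` (where it equals `-V(0) V''(0)`) and eventually
negative, so it has exactly one positive zero.
-/

open Real Filter Topology Set

noncomputable def expSum3 (A1 A2 A3 a1 a2 a3 x : ℝ) : ℝ :=
  A1 * exp (a1 * x) + A2 * exp (a2 * x) + A3 * exp (a3 * x)

theorem hasDerivAt_expSum3 (A1 A2 A3 a1 a2 a3 x : ℝ) :
    HasDerivAt (expSum3 A1 A2 A3 a1 a2 a3)
      (expSum3 (A1 * a1) (A2 * a2) (A3 * a3) a1 a2 a3 x) x := by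
  have hexp (a : ℝ) : HasDerivAt (fun y => exp (a * y)) (exp (a * x) * a) x := by
    simpa using ((hasDerivAt_id x).const_mul a).exp
  exact ((((hexp a1).const_mul A1).add ((hexp a2).const_mul A2)).add
    ((hexp a3).const_mul A3)).congr_deriv (by simp only [expSum3]; ring)

theorem deriv_expSum3 (A1 A2 A3 a1 a2 a3 : ℝ) :
    deriv (expSum3 A1 A2 A3 a1 a2 a3) = expSum3 (A1 * a1) (A2 * a2) (A3 * a3) a1 a2 a3 :=
  funext fun x => (hasDerivAt_expSum3 A1 A2 A3 a1 a2 a3 x).deriv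

noncomputable def bumpFactor (A1 A2 A3 a1 a2 a3 x : ℝ) : ℝ :=
  -(A1 * A2) * (a1 - a2) ^ 2 * exp ((a1 - a3) * x)
    + -(A1 * A3) * (a1 - a3) ^ 2 * exp ((a1 - a2) * x) + -(A2 * A3) * (a2 - a3) ^ 2

theorem expSum3_sq_sub_mul_eq_exp_mul_bumpFactor (A1 A2 A3 a1 a2 a3 x : ℝ) :
    expSum3 (A1 * a1) (A2 * a2) (A3 * a3) a1 a2 a3 x ^ 2
      - expSum3 A1 A2 A3 a1 a2 a3 x
        * expSum3 (A1 * a1 * a1) (A2 * a2 * a2) (A3 * a3 * a3) a1 a2 a3 x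
      = exp ((a2 + a3) * x) * bumpFactor A1 A2 A3 a1 a2 a3 x := by
  have e12 : exp ((a2 + a3) * x) * exp ((a1 - a3) * x) = exp (a1 * x) * exp (a2 * x) := by
    rw [← exp_add, ← exp_add]; ring_nf
  have e13 : exp ((a2 + a3) * x) * exp ((a1 - a2) * x) = exp (a1 * x) * exp (a3 * x) := by
    rw [← exp_add, ← exp_add]; ring_nf
  have e23 : exp ((a2 + a3) * x) = exp (a2 * x) * exp (a3 * x) := by
    rw [← exp_add]; ring_nf
  simp only [expSum3, bumpFactor]
  linear_combination (A1 * A2 * (a1 - a2) ^ 2) * e12 + (A1 * A3 * (a1 - a3) ^ 2) * e13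
    + (A2 * A3 * (a2 - a3) ^ 2) * e23

theorem strictAnti_const_mul_exp_mul {c r : ℝ} (hc : 0 < c) (hr : r < 0) :
    StrictAnti fun x => c * exp (r * x) :=
  (exp_strictMono.comp_strictAnti (strictAnti_mul_left hr)).const_mul hc

theorem tendsto_const_mul_exp_mul_atTop {c r : ℝ} (hr : r < 0) :
    Tendsto (fun x => c * exp (r * x)) atTop (𝓝 0) := by
  simpa using (tendsto_exp_atBot.comp (tendsto_id.const_mul_atTop_of_neg hr)).const_mul c

section bumpFactor

variable {A1 A2 A3 a1 a2 a3 : ℝ}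

theorem strictAnti_bumpFactor (h12 : a1 < a2) (h23 : a2 < a3) (hA1 : A1 < 0) (hA2 : 0 < A2)
    (hA3 : 0 < A3) : StrictAnti (bumpFactor A1 A2 A3 a1 a2 a3) := by
  have hB1 : 0 < -(A1 * A2) * (a1 - a2) ^ 2 :=
    mul_pos (neg_pos.2 (mul_neg_of_neg_of_pos hA1 hA2)) (sq_pos_of_neg (sub_neg.2 h12))
  have hB2 : 0 < -(A1 * A3) * (a1 - a3) ^ 2 :=
    mul_pos (neg_pos.2 (mul_neg_of_neg_of_pos hA1 hA3)) (sq_pos_of_neg (sub_neg.2 (h12.trans h23)))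
  exact ((strictAnti_const_mul_exp_mul hB1 (sub_neg.2 (h12.trans h23))).add
    (strictAnti_const_mul_exp_mul hB2 (sub_neg.2 h12))).add_const _

theorem tendsto_bumpFactor_atTop (h12 : a1 < a2) (h23 : a2 < a3) :
    Tendsto (bumpFactor A1 A2 A3 a1 a2 a3) atTop (𝓝 (-(A2 * A3) * (a2 - a3) ^ 2)) := by
  unfold bumpFactor
  simpa only [zero_add] using ((tendsto_const_mul_exp_mul_atTop (sub_neg.2 (h12.trans h23))).add
    (tendsto_const_mul_exp_mul_atTop (sub_neg.2 h12))).add_const (-(A2 * A3) * (a2 - a3) ^ 2)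

theorem continuous_bumpFactor : Continuous (bumpFactor A1 A2 A3 a1 a2 a3) := by
  unfold bumpFactor
  fun_prop

end bumpFactor

theorem existsUnique_pos_eq_zero_of_strictAntiOn {G : ℝ → ℝ} (hcont : ContinuousOn G (Ici 0))
    (hanti : StrictAntiOn G (Ioi 0)) (h0 : 0 < G 0) (hneg : ∀ᶠ x in atTop, G x < 0) :
    ∃! x, 0 < x ∧ G x = 0 := by
  obtain ⟨x1, hGx1, hx1⟩ := (hneg.and (eventually_gt_atTop 0)).exists
  obtain ⟨x, hx, hGx⟩ :=
    intermediate_value_Ioo' hx1.le (hcont.mono Icc_subset_Ici_self) ⟨hGx1, h0⟩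
  exact ⟨x, ⟨hx.1, hGx⟩, fun y hy => hanti.injOn hy.1 hx.1 (hy.2.trans hGx.symm)⟩

theorem stmt4_general (a1 a2 a3 A1 A2 A3 : ℝ) (h12 : a1 < a2) (h23 : a2 < a3)
    (hA3 : 0 < A3) (hA2 : 0 < A2) (hA1 : A1 < 0)
    (V : ℝ → ℝ)
    (hV : V = fun x => A1 * Real.exp (a1 * x) + A2 * Real.exp (a2 * x) + A3 * Real.exp (a3 * x))
    (hV0 : 0 < V 0) (hV'0 : deriv V 0 = 0) (hV''0 : deriv (deriv V) 0 < 0) :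
    ∃! xb : ℝ, 0 < xb ∧ (deriv V xb) ^ 2 - V xb * deriv (deriv V) xb = 0 := by
  change V = expSum3 A1 A2 A3 a1 a2 a3 at hV
  subst hV
  simp only [deriv_expSum3] at hV'0 hV''0 ⊢
  have hfactor := expSum3_sq_sub_mul_eq_exp_mul_bumpFactor A1 A2 A3 a1 a2 a3
  have hG0 : 0 < bumpFactor A1 A2 A3 a1 a2 a3 0 := by
    have h := hfactor 0
    rw [hV'0, mul_zero, exp_zero, one_mul] at h
    linarith [mul_neg_of_pos_of_neg hV0 hV''0]
  have hlim : -(A2 * A3) * (a2 - a3) ^ 2 < 0 :=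
    mul_neg_of_neg_of_pos (neg_neg_of_pos (mul_pos hA2 hA3)) (sq_pos_of_neg (sub_neg.2 h23))
  simp only [hfactor, mul_eq_zero, exp_ne_zero, false_or]
  exact existsUnique_pos_eq_zero_of_strictAntiOn continuous_bumpFactor.continuousOn
    ((strictAnti_bumpFactor h12 h23 hA1 hA2 hA3).strictAntiOn _) hG0
    ((tendsto_bumpFactor_atTop h12 h23).eventually (eventually_lt_nhds hlim))

theorem stmt4 (a1 a2 a3 A1 A2 A3 : ℝ) (h12 : a1 < a2) (h23 : a2 < a3) (h3 : a3 < 0)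
    (hA3 : 0 < A3) (hA2 : 0 < A2) (hA1 : A1 < 0)
    (V : ℝ → ℝ)
    (hV : V = fun x => A1 * Real.exp (a1 * x) + A2 * Real.exp (a2 * x) + A3 * Real.exp (a3 * x))
    (hV0 : 0 < V 0) (hV'0 : deriv V 0 = 0) (hV''0 : deriv (deriv V) 0 < 0) :
    ∃! xb : ℝ, 0 < xb ∧ (deriv V xb) ^ 2 - V xb * deriv (deriv V) xb = 0 :=
  stmt4_general a1 a2 a3 A1 A2 A3 h12 h23 hA3 hA2 hA1 V hV hV0 hV'0 hV''0
end

section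
/- Let V(x) = Σ_{i=1}^3 A_i e^{a_i x} with a_1 < a_2 < a_3 < 0, A_3 > 0, V(0) > 0, V'(0) = 0, V''(0) < 0. Then the function -V'/V admits a local maximum at some x_b > 0 if and only if A_2 > 0. -/
/-!
Write `V'` and `V''` for the derivatives of `V`, so `(-V'/V)' = (V'^2 - V V'')/V^2`, and
`V V'' - V'^2 = e^{(a1+a3)x} g(x)` with `g = reducedWronskian`,
`g(x) = c12 e^{(a2-a3)x} + c13 + c23 e^{(a2-a1)x}`, `cij = Ai Aj (ai - aj)^2`.
The conditions at `0` give `g(0) = V(0) V''(0) < 0`.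

If `A2 > 0`, then `A1 < 0`, so `g` is strictly increasing and unbounded: it changes sign exactly
once, at some `xb > 0`, where `-V'/V` switches from increasing to decreasing. `V(xb) ≠ 0`
because `V' - a1 V > 0`.

If `A2 ≤ 0`, then `g < 0` on `[0, ∞)` (for `A1 > 0` this uses convexity of `exp` to absorb
`c13`). So `-V'/V` has positive derivative wherever `V ≠ 0`, and just left of a zero of `V` it is
positive, while Lean's `V'/0 = 0` gives it the value `0` at the zero itself.
-/

open Real Filter Set Topology

section LogDecay

variable {f f' f'' : ℝ → ℝ} {x : ℝ}

lemma hasDerivAt_neg_div {d : ℝ} (hf : HasDerivAt f (f' x) x) (hf' : HasDerivAt f' d x)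
    (hx : f x ≠ 0) :
    HasDerivAt (fun y => -f' y / f y) ((f' x ^ 2 - f x * d) / f x ^ 2) x :=
  (hf'.neg.div hf hx).congr_deriv (by simp only [Pi.neg_apply]; ring)

/-- Near a simple zero of `f`, `-f'/f` behaves like `-1/(y - x)`. -/
lemma eventually_neg_div_pos_of_eq_zero (hf : HasDerivAt f (f' x) x) (hf' : ContinuousAt f' x)
    (h0 : f x = 0) (hd : f' x ≠ 0) : ∀ᶠ y in 𝓝[<] x, 0 < -f' y / f y := by
  have hslope : Tendsto (fun y => slope f x y * f' y) (𝓝[<] x) (𝓝 (f' x * f' x)) :=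
    ((hasDerivAt_iff_tendsto_slope.1 hf).mono_left (nhdsLT_le_nhdsNE x)).mul
      (hf'.tendsto.mono_left nhdsWithin_le_nhds)
  filter_upwards [hslope.eventually (lt_mem_nhds (mul_self_pos.2 hd)), self_mem_nhdsWithin]
    with y hpos (hy : y < x)
  rw [slope_def_field, h0, sub_zero, div_mul_eq_mul_div] at hpos
  have hneg : f y * f' y < 0 := by
    rcases div_pos_iff.1 hpos with h | h
    · linarith [h.2, sub_neg.2 hy]
    · exact h.1
  rcases mul_neg_iff.1 hneg with h | h
  · exact div_pos (neg_pos.2 h.2) h.1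
  · exact div_pos_of_neg_of_neg (neg_neg_of_pos h.2) h.1

lemma not_isLocalMax_neg_div {d : ℝ} (hf : HasDerivAt f (f' x) x) (hf' : HasDerivAt f' d x)
    (h : f x * d < f' x ^ 2) : ¬IsLocalMax (fun y => -f' y / f y) x := by
  intro hmax
  by_cases h0 : f x = 0
  · have hd : f' x ≠ 0 := by
      rintro hd
      simp [h0, hd] at h
    obtain ⟨y, hle, hpos⟩ := ((hmax.filter_mono nhdsWithin_le_nhds).and
      (eventually_neg_div_pos_of_eq_zero hf hf'.continuousAt h0 hd)).exists
    simp only [h0, div_zero] at hle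
    linarith
  · have h' := hmax.hasDerivAt_eq_zero (hasDerivAt_neg_div hf hf' h0)
    rcases div_eq_zero_iff.1 h' with h' | h'
    · linarith
    · exact h0 (pow_eq_zero_iff two_ne_zero |>.1 h')

lemma isLocalMax_neg_div (hf : ∀ y, HasDerivAt f (f' y) y) (hf' : ∀ y, HasDerivAt f' (f'' y) y)
    (hx : f x ≠ 0) (hl : ∀ᶠ y in 𝓝[<] x, f y * f'' y ≤ f' y ^ 2)
    (hr : ∀ᶠ y in 𝓝[>] x, f' y ^ 2 ≤ f y * f'' y) :
    IsLocalMax (fun y => -f' y / f y) x := by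
  have hne : ∀ᶠ y in 𝓝 x, f y ≠ 0 := (hf x).continuousAt.eventually_ne hx
  have hderiv : ∀ y, f y ≠ 0 →
      deriv (fun y => -f' y / f y) y = (f' y ^ 2 - f y * f'' y) / f y ^ 2 :=
    fun y hy => (hasDerivAt_neg_div (hf y) (hf' y) hy).deriv
  refine isLocalMax_of_deriv ((hf' x).continuousAt.neg.div (hf x).continuousAt hx)
    ((hne.filter_mono nhdsWithin_le_nhds).mono fun y hy =>
      (hasDerivAt_neg_div (hf y) (hf' y) hy).differentiableAt) ?_ ?_
  · filter_upwards [nhdsWithin_le_nhds hne, hl] with y hy hly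
    rw [hderiv y hy]
    exact div_nonneg (by linarith) (sq_nonneg _)
  · filter_upwards [nhdsWithin_le_nhds hne, hr] with y hy hry
    rw [hderiv y hy]
    exact div_nonpos_of_nonpos_of_nonneg (by linarith) (sq_nonneg _)

end LogDecay

lemma sub_le_mul_exp_add_mul_exp {a1 a2 a3 : ℝ} (h12 : a1 ≤ a2) (h23 : a2 ≤ a3) (x : ℝ) :
    a3 - a1 ≤ (a2 - a1) * exp ((a2 - a3) * x) + (a3 - a2) * exp ((a2 - a1) * x) := by
  nlinarith [mul_le_mul_of_nonneg_left (add_one_le_exp ((a2 - a3) * x)) (sub_nonneg.2 h12),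
    mul_le_mul_of_nonneg_left (add_one_le_exp ((a2 - a1) * x)) (sub_nonneg.2 h23)]

noncomputable def expSum (a1 a2 a3 A1 A2 A3 x : ℝ) : ℝ :=
  A1 * exp (a1 * x) + A2 * exp (a2 * x) + A3 * exp (a3 * x)

/-- The Wronskian `V V'' - V'^2` of `V = expSum a1 a2 a3 A1 A2 A3`, divided by
`exp ((a1 + a3) * x)`. -/
noncomputable def reducedWronskian (a1 a2 a3 A1 A2 A3 x : ℝ) : ℝ :=
  A1 * A2 * (a1 - a2) ^ 2 * exp ((a2 - a3) * x) + A1 * A3 * (a1 - a3) ^ 2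
    + A2 * A3 * (a2 - a3) ^ 2 * exp ((a2 - a1) * x)

lemma expSum_mul_sub_sq (a1 a2 a3 A1 A2 A3 x : ℝ) :
    expSum a1 a2 a3 A1 A2 A3 x * expSum a1 a2 a3 (A1 * a1 * a1) (A2 * a2 * a2) (A3 * a3 * a3) x
      - expSum a1 a2 a3 (A1 * a1) (A2 * a2) (A3 * a3) x ^ 2
      = exp ((a1 + a3) * x) * reducedWronskian a1 a2 a3 A1 A2 A3 x := by
  have e12 : exp ((a1 + a3) * x) * exp ((a2 - a3) * x) = exp (a1 * x) * exp (a2 * x) := by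
    rw [← exp_add, ← exp_add]; ring_nf
  have e13 : exp ((a1 + a3) * x) = exp (a1 * x) * exp (a3 * x) := by
    rw [← exp_add]; ring_nf
  have e23 : exp ((a1 + a3) * x) * exp ((a2 - a1) * x) = exp (a2 * x) * exp (a3 * x) := by
    rw [← exp_add, ← exp_add]; ring_nf
  simp only [expSum, reducedWronskian]
  linear_combination -(A1 * A2 * (a1 - a2) ^ 2) * e12 - (A1 * A3 * (a1 - a3) ^ 2) * e13
    - (A2 * A3 * (a2 - a3) ^ 2) * e23

section ExpSum

variable {a1 a2 a3 A1 A2 A3 : ℝ}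

lemma hasDerivAt_expSum (x : ℝ) :
    HasDerivAt (expSum a1 a2 a3 A1 A2 A3) (expSum a1 a2 a3 (A1 * a1) (A2 * a2) (A3 * a3) x) x := by
  have h : ∀ a A : ℝ, HasDerivAt (fun y => A * exp (a * y)) (A * a * exp (a * x)) x :=
    fun a A => (((hasDerivAt_id x).const_mul a).exp.const_mul A).congr_deriv (by simp; ring)
  exact ((h a1 A1).add (h a2 A2)).add (h a3 A3)

lemma deriv_expSum :
    deriv (expSum a1 a2 a3 A1 A2 A3) = expSum a1 a2 a3 (A1 * a1) (A2 * a2) (A3 * a3) :=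
  funext fun x => (hasDerivAt_expSum x).deriv

lemma expSum_deriv_sub_mul_pos (h12 : a1 < a2) (h13 : a1 < a3) (hA2 : 0 < A2) (hA3 : 0 < A3)
    (x : ℝ) :
    0 < expSum a1 a2 a3 (A1 * a1) (A2 * a2) (A3 * a3) x - a1 * expSum a1 a2 a3 A1 A2 A3 x := by
  have h : expSum a1 a2 a3 (A1 * a1) (A2 * a2) (A3 * a3) x - a1 * expSum a1 a2 a3 A1 A2 A3 x
      = A2 * (a2 - a1) * exp (a2 * x) + A3 * (a3 - a1) * exp (a3 * x) := by
    simp only [expSum]; ring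
  rw [h]
  have := sub_pos.2 h12
  have := sub_pos.2 h13
  positivity

lemma reducedWronskian_neg (h12 : a1 < a2) (h23 : a2 < a3) (h3 : a3 < 0) (hA3 : 0 < A3)
    (hA2 : A2 ≤ 0) (hV0 : 0 < expSum a1 a2 a3 A1 A2 A3 0)
    (hV'0 : expSum a1 a2 a3 (A1 * a1) (A2 * a2) (A3 * a3) 0 = 0)
    (hW0 : reducedWronskian a1 a2 a3 A1 A2 A3 0 < 0) {x : ℝ} (hx : 0 ≤ x) :
    reducedWronskian a1 a2 a3 A1 A2 A3 x < 0 := by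
  simp only [expSum, reducedWronskian, mul_zero, exp_zero, mul_one] at hV0 hV'0 hW0 ⊢
  set p := exp ((a2 - a3) * x)
  set q := exp ((a2 - a1) * x)
  have hp : p ≤ 1 := exp_le_one_iff.2 (mul_nonpos_of_nonpos_of_nonneg (by linarith) hx)
  have hq : 1 ≤ q := one_le_exp (mul_nonneg (by linarith) hx)
  have hc23 : A2 * A3 * (a2 - a3) ^ 2 ≤ 0 :=
    mul_nonpos_of_nonpos_of_nonneg (mul_nonpos_of_nonpos_of_nonneg hA2 hA3.le) (sq_nonneg _)
  rcases le_or_gt A1 0 with hA1 | hA1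
  · have hc12 : 0 ≤ A1 * A2 * (a1 - a2) ^ 2 :=
      mul_nonneg (mul_nonneg_of_nonpos_of_nonpos hA1 hA2) (sq_nonneg _)
    nlinarith [mul_le_mul_of_nonneg_left hp hc12, mul_le_mul_of_nonpos_left hq hc23]
  · have h13 : 0 < a3 - a1 := sub_pos.2 (h12.trans h23)
    have hc13 : 0 < A1 * A3 * (a1 - a3) ^ 2 :=
      mul_pos (mul_pos hA1 hA3) (sq_pos_of_neg (sub_neg.2 (h12.trans h23)))
    -- after trading `c13` for `p` and `q` by convexity, the coefficient of `q` is negative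
    have hR : (a3 - a1) * (A2 * A3 * (a2 - a3) ^ 2) + (a3 - a2) * (A1 * A3 * (a1 - a3) ^ 2)
        = A3 * (a3 - a2) * (a3 - a1) * (a3 * (A1 + A2 + A3) - (A1 * a1 + A2 * a2 + A3 * a3)) := by
      ring
    have hR' : (a3 - a1) * (A2 * A3 * (a2 - a3) ^ 2) + (a3 - a2) * (A1 * A3 * (a1 - a3) ^ 2) < 0 := by
      rw [hR, hV'0, sub_zero]
      have := sub_pos.2 h23
      exact mul_neg_of_pos_of_neg (by positivity) (mul_neg_of_neg_of_pos h3 hV0)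
    have key : (a3 - a1) * (A1 * A2 * (a1 - a2) ^ 2 * p + A1 * A3 * (a1 - a3) ^ 2
        + A2 * A3 * (a2 - a3) ^ 2 * q) < 0 := by
      nlinarith [mul_le_mul_of_nonneg_left (sub_le_mul_exp_add_mul_exp h12.le h23.le x) hc13.le,
        mul_le_mul_of_nonpos_left (hp.trans hq) hR'.le,
        mul_neg_of_neg_of_pos (mul_neg_of_pos_of_neg h13 hW0) (exp_pos ((a2 - a3) * x))]
    exact neg_of_mul_neg_right key h13.le

lemma not_isLocalMax_of_nonpos (h12 : a1 < a2) (h23 : a2 < a3) (h3 : a3 < 0) (hA3 : 0 < A3)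
    (hA2 : A2 ≤ 0) (hV0 : 0 < expSum a1 a2 a3 A1 A2 A3 0)
    (hV'0 : expSum a1 a2 a3 (A1 * a1) (A2 * a2) (A3 * a3) 0 = 0)
    (hW0 : reducedWronskian a1 a2 a3 A1 A2 A3 0 < 0) {xb : ℝ} (hxb : 0 ≤ xb) :
    ¬IsLocalMax (fun x => -expSum a1 a2 a3 (A1 * a1) (A2 * a2) (A3 * a3) x
      / expSum a1 a2 a3 A1 A2 A3 x) xb := by
  refine not_isLocalMax_neg_div (hasDerivAt_expSum xb) (hasDerivAt_expSum xb) ?_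
  have hW := mul_neg_of_pos_of_neg (exp_pos ((a1 + a3) * xb))
    (reducedWronskian_neg h12 h23 h3 hA3 hA2 hV0 hV'0 hW0 hxb)
  linarith [expSum_mul_sub_sq a1 a2 a3 A1 A2 A3 xb]

lemma continuous_reducedWronskian : Continuous (reducedWronskian a1 a2 a3 A1 A2 A3) := by
  unfold reducedWronskian
  fun_prop

lemma reducedWronskian_strictMono (h12 : a1 < a2) (h23 : a2 < a3) (hA1 : A1 < 0) (hA2 : 0 < A2)
    (hA3 : 0 < A3) : StrictMono (reducedWronskian a1 a2 a3 A1 A2 A3) := by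
  intro x y hxy
  have h1 : A1 * A2 * (a1 - a2) ^ 2 * exp ((a2 - a3) * x)
      < A1 * A2 * (a1 - a2) ^ 2 * exp ((a2 - a3) * y) :=
    mul_lt_mul_of_neg_left (exp_lt_exp.2 (mul_lt_mul_of_neg_left hxy (sub_neg.2 h23)))
      (mul_neg_of_neg_of_pos (mul_neg_of_neg_of_pos hA1 hA2) (sq_pos_of_neg (sub_neg.2 h12)))
  have h2 : A2 * A3 * (a2 - a3) ^ 2 * exp ((a2 - a1) * x)
      < A2 * A3 * (a2 - a3) ^ 2 * exp ((a2 - a1) * y) :=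
    mul_lt_mul_of_pos_left (exp_lt_exp.2 (mul_lt_mul_of_pos_left hxy (sub_pos.2 h12)))
      (mul_pos (mul_pos hA2 hA3) (sq_pos_of_neg (sub_neg.2 h23)))
  simp only [reducedWronskian]
  linarith

lemma tendsto_reducedWronskian_atTop (h12 : a1 < a2) (h23 : a2 < a3) (hA2 : 0 < A2)
    (hA3 : 0 < A3) : Tendsto (reducedWronskian a1 a2 a3 A1 A2 A3) atTop atTop := by
  have hdecay : Tendsto (fun x => A1 * A2 * (a1 - a2) ^ 2 * exp ((a2 - a3) * x)
      + A1 * A3 * (a1 - a3) ^ 2) atTop (𝓝 (A1 * A2 * (a1 - a2) ^ 2 * 0 + A1 * A3 * (a1 - a3) ^ 2)) :=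
    ((tendsto_exp_atBot.comp (tendsto_id.const_mul_atTop_of_neg (sub_neg.2 h23))).const_mul
      _).add_const _
  have hgrowth : Tendsto (fun x => A2 * A3 * (a2 - a3) ^ 2 * exp ((a2 - a1) * x)) atTop atTop :=
    (tendsto_exp_atTop.comp (tendsto_id.const_mul_atTop (sub_pos.2 h12))).const_mul_atTop
      (mul_pos (mul_pos hA2 hA3) (sq_pos_of_neg (sub_neg.2 h23)))
  exact hdecay.add_atTop hgrowth

lemma exists_isLocalMax_of_pos (h12 : a1 < a2) (h23 : a2 < a3) (hA3 : 0 < A3) (hA2 : 0 < A2)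
    (hW0 : reducedWronskian a1 a2 a3 A1 A2 A3 0 < 0) :
    ∃ xb, 0 < xb ∧ IsLocalMax (fun x => -expSum a1 a2 a3 (A1 * a1) (A2 * a2) (A3 * a3) x
      / expSum a1 a2 a3 A1 A2 A3 x) xb := by
  have hA1 : A1 < 0 := by
    by_contra! hA1
    simp only [reducedWronskian, mul_zero, exp_zero, mul_one] at hW0
    nlinarith [mul_nonneg (mul_nonneg hA1 hA2.le) (sq_nonneg (a1 - a2)),
      mul_nonneg (mul_nonneg hA1 hA3.le) (sq_nonneg (a1 - a3)),
      mul_pos (mul_pos hA2 hA3) (sq_pos_of_neg (sub_neg.2 h23))]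
  have hmono := reducedWronskian_strictMono h12 h23 hA1 hA2 hA3
  obtain ⟨x0, hx0⟩ : 0 ∈ range (reducedWronskian a1 a2 a3 A1 A2 A3) :=
    mem_range_of_exists_le_of_exists_ge continuous_reducedWronskian ⟨0, hW0.le⟩
      ((tendsto_reducedWronskian_atTop h12 h23 hA2 hA3).eventually_ge_atTop 0).exists
  have hV : expSum a1 a2 a3 A1 A2 A3 x0 ≠ 0 := by
    intro hV
    have hid := expSum_mul_sub_sq a1 a2 a3 A1 A2 A3 x0
    have hpos := expSum_deriv_sub_mul_pos (A1 := A1) h12 (h12.trans h23) hA2 hA3 x0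
    rw [hV, hx0] at hid
    rw [hV] at hpos
    nlinarith
  refine ⟨x0, hmono.lt_iff_lt.1 (hx0 ▸ hW0),
    isLocalMax_neg_div hasDerivAt_expSum hasDerivAt_expSum hV ?_ ?_⟩
  · filter_upwards [self_mem_nhdsWithin] with y (hy : y < x0)
    have hW := mul_neg_of_pos_of_neg (exp_pos ((a1 + a3) * y)) (hx0 ▸ hmono hy)
    linarith [expSum_mul_sub_sq a1 a2 a3 A1 A2 A3 y]
  · filter_upwards [self_mem_nhdsWithin] with y (hy : x0 < y)
    have hW := mul_pos (exp_pos ((a1 + a3) * y)) (hx0 ▸ hmono hy)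
    linarith [expSum_mul_sub_sq a1 a2 a3 A1 A2 A3 y]

end ExpSum

theorem stmt7 (a1 a2 a3 A1 A2 A3 : ℝ) (h12 : a1 < a2) (h23 : a2 < a3) (h3 : a3 < 0)
    (hA3 : 0 < A3)
    (V : ℝ → ℝ)
    (hV : V = fun x => A1 * Real.exp (a1 * x) + A2 * Real.exp (a2 * x) + A3 * Real.exp (a3 * x))
    (hV0 : 0 < V 0) (hV'0 : deriv V 0 = 0) (hV''0 : deriv (deriv V) 0 < 0) :
    (∃ xb : ℝ, 0 < xb ∧ IsLocalMax (fun x => -deriv V x / V x) xb) ↔ 0 < A2 := by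
  replace hV : V = expSum a1 a2 a3 A1 A2 A3 := hV
  subst hV
  simp only [deriv_expSum] at hV'0 hV''0 ⊢
  have hW0 : reducedWronskian a1 a2 a3 A1 A2 A3 0 < 0 := by
    have h := expSum_mul_sub_sq a1 a2 a3 A1 A2 A3 0
    rw [hV'0, mul_zero, exp_zero, one_mul] at h
    linarith [mul_neg_of_pos_of_neg hV0 hV''0]
  constructor
  · rintro ⟨xb, hxb, hmax⟩
    by_contra! hA2
    exact not_isLocalMax_of_nonpos h12 h23 h3 hA3 hA2 hV0 hV'0 hW0 hxb.le hmax
  · exact fun hA2 => exists_isLocalMax_of_pos h12 h23 hA3 hA2 hW0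
end

section
/- Let n ≥ 3 and V(x) = Σ_{i=1}^n A_i e^{a_i x} with a_1 < ... < a_n < 0, A_n > 0 and A_{n-1} > 0, and suppose V(0) > 0, V'(0) = 0, V''(0) < 0. Then there exists x_b > 0 such that (V'(x_b))^2 - V(x_b)·V''(x_b) = 0. -/
/-!
Write `W = V'² - V V''`. The hypotheses at `0` give `W 0 = -V 0 · V'' 0 > 0`. On the other hand
`W` is again a sum of exponentials, `W x = ∑ᵢⱼ Aᵢ Aⱼ aⱼ (aᵢ - aⱼ) e^{(aᵢ + aⱼ) x}`, whose diagonal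
terms vanish. Among the remaining exponents `aᵢ + aⱼ` the largest is `a_{n-1} + a_n`, and the two
terms carrying it add up to `-A_{n-1} A_n (a_n - a_{n-1})² < 0`; so `W < 0` for large `x`, and the
intermediate value theorem gives a zero of `W` on `(0, ∞)`.
-/

open Real Filter

namespace ExpPoly

variable {ι : Type*} [Fintype ι]

noncomputable def expPoly (c b : ι → ℝ) (x : ℝ) : ℝ := ∑ k, c k * exp (b k * x)

theorem hasDerivAt_expPoly (c b : ι → ℝ) (x : ℝ) :
    HasDerivAt (expPoly c b) (expPoly (fun k => c k * b k) b x) x := by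
  refine HasDerivAt.fun_sum fun k _ => ?_
  exact ((((hasDerivAt_id x).const_mul (b k)).exp).const_mul (c k)).congr_deriv (by
    simp only [id, mul_one]; ring)

theorem deriv_expPoly (c b : ι → ℝ) : deriv (expPoly c b) = expPoly (fun k => c k * b k) b :=
  funext fun x => (hasDerivAt_expPoly c b x).deriv

theorem continuous_expPoly (c b : ι → ℝ) : Continuous (expPoly c b) := by
  unfold expPoly
  fun_prop

theorem eventually_expPoly_neg (c b : ι → ℝ) (s : ℝ) (S : Finset ι)
    (hS : ∀ k ∈ S, b k = s) (hlt : ∀ k ∉ S, c k ≠ 0 → b k < s) (hneg : ∑ k ∈ S, c k < 0) :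
    ∀ᶠ x in atTop, expPoly c b x < 0 := by
  classical
  have hscaled : ∀ x, exp (-s * x) * expPoly c b x = ∑ k, c k * exp ((b k - s) * x) := by
    intro x
    rw [expPoly, Finset.mul_sum]
    refine Finset.sum_congr rfl fun k _ => ?_
    rw [mul_left_comm, ← exp_add]
    ring_nf
  have hterm : ∀ k, Tendsto (fun x => c k * exp ((b k - s) * x)) atTop
      (nhds (if k ∈ S then c k else 0)) := by
    intro k
    by_cases hk : k ∈ S
    · simp [hk, hS k hk]
    · rw [if_neg hk]
      by_cases hck : c k = 0
      · simp [hck]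
      have hdecay : Tendsto (fun x => exp ((b k - s) * x)) atTop (nhds 0) :=
        tendsto_exp_atBot.comp
          (tendsto_id.const_mul_atTop_of_neg (sub_neg.mpr (hlt k hk hck)))
      simpa using hdecay.const_mul (c k)
  have hlim : Tendsto (fun x => exp (-s * x) * expPoly c b x) atTop (nhds (∑ k ∈ S, c k)) := by
    simp only [hscaled]
    convert tendsto_finsetSum Finset.univ fun k _ => hterm k using 2
    rw [Finset.sum_ite_mem, Finset.univ_inter]
  filter_upwards [hlim.eventually_lt_const hneg] with x hx
  exact neg_of_mul_neg_right hx (exp_pos _).le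

theorem sq_deriv_sub_mul_deriv_deriv_expPoly (A a : ι → ℝ) (x : ℝ) :
    deriv (expPoly A a) x ^ 2 - expPoly A a x * deriv (deriv (expPoly A a)) x =
      expPoly (fun p : ι × ι => A p.1 * A p.2 * a p.2 * (a p.1 - a p.2))
        (fun p => a p.1 + a p.2) x := by
  simp only [deriv_expPoly, expPoly]
  rw [sq, Finset.sum_mul_sum, Finset.sum_mul_sum, ← Finset.sum_sub_distrib,
    Fintype.sum_prod_type]
  refine Finset.sum_congr rfl fun i _ => ?_
  rw [← Finset.sum_sub_distrib]
  refine Finset.sum_congr rfl fun j _ => ?_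
  rw [add_mul, exp_add]
  ring

end ExpPoly

open ExpPoly

theorem StrictMono.add_lt_add_last_two {n : ℕ} {a : Fin n → ℝ} (ha : StrictMono a)
    (hn : 2 ≤ n) {i j : Fin n} (hij : i < j)
    (hne : (i, j) ≠ (⟨n - 2, by omega⟩, ⟨n - 1, by omega⟩)) :
    a i + a j < a ⟨n - 2, by omega⟩ + a ⟨n - 1, by omega⟩ := by
  have hij' : (i : ℕ) < j := hij
  have hi : a i ≤ a ⟨n - 2, by omega⟩ := ha.monotone (Fin.mk_le_mk.mpr (by omega))
  have hj : a j ≤ a ⟨n - 1, by omega⟩ := ha.monotone (Fin.mk_le_mk.mpr (by omega))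
  by_cases hjtop : (j : ℕ) = n - 1
  · have hitop : (i : ℕ) ≠ n - 2 := fun h => hne (by ext <;> simp [h, hjtop])
    have : a i < a ⟨n - 2, by omega⟩ := ha (Fin.mk_lt_mk.mpr (by omega))
    linarith
  · have : a j < a ⟨n - 1, by omega⟩ := ha (Fin.mk_lt_mk.mpr (by omega))
    linarith

theorem eventually_sq_deriv_sub_mul_deriv_deriv_expPoly_neg {n : ℕ} (hn : 2 ≤ n)
    (A a : Fin n → ℝ) (ha : StrictMono a) (hAn : 0 < A ⟨n - 1, by omega⟩)
    (hAn1 : 0 < A ⟨n - 2, by omega⟩) :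
    ∀ᶠ x in atTop,
      deriv (expPoly A a) x ^ 2 - expPoly A a x * deriv (deriv (expPoly A a)) x < 0 := by
  set p : Fin n := ⟨n - 1, by omega⟩
  set q : Fin n := ⟨n - 2, by omega⟩
  have hqp : q < p := Fin.mk_lt_mk.mpr (by omega)
  simp only [sq_deriv_sub_mul_deriv_deriv_expPoly]
  refine eventually_expPoly_neg _ _ (a q + a p) {(q, p), (p, q)} ?_ ?_ ?_
  · simp [add_comm]
  · rintro ⟨i, j⟩ hS hc
    simp only [Finset.mem_insert, Finset.mem_singleton, not_or] at hS
    have hij : i ≠ j := by rintro rfl; simp at hc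
    rcases hij.lt_or_gt with hlt | hgt
    · exact ha.add_lt_add_last_two hn hlt hS.1
    · rw [add_comm]
      exact ha.add_lt_add_last_two hn hgt fun h => hS.2 (by
        rw [Prod.mk.injEq] at h ⊢; exact ⟨h.2, h.1⟩)
  · rw [Finset.sum_pair (by simp [hqp.ne])]
    have hgap : 0 < (a p - a q) ^ 2 := pow_pos (sub_pos.mpr (ha hqp)) 2
    nlinarith [mul_pos (mul_pos hAn1 hAn) hgap]

theorem stmt8 (n : ℕ) (hn : 3 ≤ n) (A a : Fin n → ℝ) (ha : StrictMono a)
    (hAn : 0 < A ⟨n - 1, by omega⟩) (hAn1 : 0 < A ⟨n - 2, by omega⟩)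
    (V : ℝ → ℝ) (hV : V = fun x => ∑ i, A i * Real.exp (a i * x))
    (hV0 : 0 < V 0) (hV'0 : deriv V 0 = 0) (hV''0 : deriv (deriv V) 0 < 0) :
    ∃ xb : ℝ, 0 < xb ∧ (deriv V xb) ^ 2 - V xb * deriv (deriv V) xb = 0 := by
  obtain rfl : V = expPoly A a := hV
  set W : ℝ → ℝ := fun x => (deriv (expPoly A a) x) ^ 2 -
    expPoly A a x * deriv (deriv (expPoly A a)) x
  have hW0 : 0 < W 0 := by
    simp only [W, hV'0]
    nlinarith
  have hW_eventually_neg : ∀ᶠ x in atTop, W x < 0 :=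
    eventually_sq_deriv_sub_mul_deriv_deriv_expPoly_neg (by omega) A a ha hAn hAn1
  obtain ⟨x₁, hx₁, hWx₁⟩ := ((eventually_gt_atTop 0).and hW_eventually_neg).exists
  have hW : Continuous W := by
    simp only [W, sq_deriv_sub_mul_deriv_deriv_expPoly]
    exact continuous_expPoly _ _
  obtain ⟨xb, hxb, hWxb⟩ :=
    intermediate_value_Ioo' hx₁.le hW.continuousOn ⟨hWx₁, hW0⟩
  exact ⟨xb, hxb.1, hWxb⟩
end
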